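/- Let G be a chordal d-sphere graph with d ≤ 3 and at least d+1 vertices. If G is d-connected, then G is globally d-sphere-rigid. -/

import Mathlib

open scoped RealInnerProductSpace

variable {V : Type*}

/-- A `d`-sphere graph realisation: adjacent vertices at distance exactly 1,
distinct non-adjacent vertices at distance greater than 1. -/
def IsSphereRealisation (d : ℕ) (G : SimpleGraph V) (ρ : V → EuclideanSpace ℝ (Fin d)) : Prop :=
  (∀ v w, G.Adj v w → dist (ρ v) (ρ w) = 1) ∧
  (∀ v w, v ≠ w → ¬ G.Adj v w → 1 < dist (ρ v) (ρ w))

/-- Two realisations are congruent if they differ by a Euclidean isometry of `ℝ^d`. -/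
def RealisationCongruent (d : ℕ) (ρ ρ' : V → EuclideanSpace ℝ (Fin d)) : Prop :=
  ∃ T : EuclideanSpace ℝ (Fin d) ≃ᵢ EuclideanSpace ℝ (Fin d), ρ' = ⇑T ∘ ρ

/-- `G` is a `d`-sphere graph if it admits some `d`-sphere realisation. -/
def IsSphereGraph (d : ℕ) (G : SimpleGraph V) : Prop :=
  ∃ ρ, IsSphereRealisation d G ρ

/-- `G` is `d`-sphere-rigid: it has only finitely many `d`-sphere realisations
modulo Euclidean isometries. -/
def SphereRigid (d : ℕ) (G : SimpleGraph V) : Prop :=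
  ∃ S : Set (V → EuclideanSpace ℝ (Fin d)), S.Finite ∧
    ∀ ρ, IsSphereRealisation d G ρ → ∃ ρ' ∈ S, RealisationCongruent d ρ ρ'

/-- `G` is globally `d`-sphere-rigid: any two `d`-sphere realisations are congruent. -/
def GloballySphereRigid (d : ℕ) (G : SimpleGraph V) : Prop :=
  ∀ ρ ρ', IsSphereRealisation d G ρ → IsSphereRealisation d G ρ' → RealisationCongruent d ρ ρ'

/-- A graph is `d`-connected if it has more than `d` vertices and deleting any
set of fewer than `d` vertices leaves it connected. -/
def IsDConnected (d : ℕ) [Fintype V] (G : SimpleGraph V) : Prop :=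
  d < Fintype.card V ∧
    ∀ S : Set V, S.ncard < d → (G.induce (Sᶜ : Set V)).Connected

/-- A `d`-tree: there is an ordering of the vertices such that the first `d+1`
vertices form a clique, and every later vertex is adjacent among earlier vertices
to exactly the vertices of a `d`-clique. -/
def IsDTree (d : ℕ) (G : SimpleGraph V) : Prop :=
  ∃ (n : ℕ) (e : Fin n ≃ V), d + 1 ≤ n ∧
    (∀ i j : Fin n, (i : ℕ) < d + 1 → (j : ℕ) < d + 1 → i ≠ j → G.Adj (e i) (e j)) ∧
    (∀ j : Fin n, d + 1 ≤ (j : ℕ) → ∃ S : Finset (Fin n),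
      S.card = d ∧ (∀ i ∈ S, (i : ℕ) < (j : ℕ)) ∧
      (∀ i ∈ S, ∀ k ∈ S, i ≠ k → G.Adj (e i) (e k)) ∧
      (∀ i : Fin n, (i : ℕ) < (j : ℕ) → (G.Adj (e i) (e j) ↔ i ∈ S)))

/-- A cycle (of length at least 4) has a chord: two vertices on the cycle are
adjacent in `G` but the edge between them is not an edge of the cycle. -/
def WalkHasChord {G : SimpleGraph V} {v : V} (w : G.Walk v v) : Prop :=
  ∃ a b, a ∈ w.support ∧ b ∈ w.support ∧ G.Adj a b ∧ s(a, b) ∉ w.edges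

/-- A graph is chordal if every cycle of length at least 4 has a chord. -/
def IsChordal (G : SimpleGraph V) : Prop :=
  ∀ (v : V) (w : G.Walk v v), w.IsCycle → 4 ≤ w.length → WalkHasChord w

/-- The clique number of `G` is at most `m`. -/
def CliqueNumAtMost (G : SimpleGraph V) (m : ℕ) : Prop :=
  ∀ (n : ℕ) (s : Finset V), G.IsNClique n s → n ≤ m

/-!
A finite chordal graph has a simplicial vertex outside any given proper clique (Dirac): for
non-adjacent `a`, `b` a minimum `a`–`b` separator `S` is a clique, since two chordless paths
between non-adjacent `s, t ∈ S` through the two sides would close up to a chordless cycle, and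
induction on the side of `a` together with `S` produces the vertex.

If `G` is moreover `d`-connected and has a `d`-sphere realisation, a simplicial vertex `v` has
exactly `d` neighbours: at least `d` by connectivity, at most `d` because mutually adjacent
vertices are realised as a regular simplex, which is affinely independent. Deleting `v` keeps
`G` chordal and `d`-connected, so two realisations agree up to an isometry away from `v`. The
clique `N(v)` has a common neighbour `u ≠ v`, and the `d` affinely independent points of `N(v)`
have at most two points at unit distance from all of them, namely the images of `v` and `u`;
the image of `v` cannot be that of `u`, as `u` and `v` are not adjacent. The induction starts
at the complete graph on `d + 1` vertices, whose realisations are regular simplices, all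
congruent.
-/

open Module

section Geometry

variable {E : Type*} [NormedAddCommGroup E] [InnerProductSpace ℝ E]

theorem real_inner_sub_sub_eq_dist (x y z : E) :
    ⟪x - z, y - z⟫ = (dist x z ^ 2 + dist y z ^ 2 - dist x y ^ 2) / 2 := by
  rw [real_inner_eq_norm_mul_self_add_norm_mul_self_sub_norm_sub_mul_self_div_two,
    sub_sub_sub_cancel_right, dist_eq_norm, dist_eq_norm, dist_eq_norm]
  ring

theorem affineIndependent_of_pairwise_dist_eq_one {ι : Type*} {p : ι → E}
    (hp : Pairwise fun i j => dist (p i) (p j) = 1) : AffineIndependent ℝ p := by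
  classical
  rcases isEmpty_or_nonempty ι with hι | ⟨⟨i₀⟩⟩
  · exact affineIndependent_of_subsingleton ℝ p
  rw [affineIndependent_iff_linearIndependent_vsub ℝ p i₀, linearIndependent_iff']
  intro s g hg
  have hgram (i j : {i // i ≠ i₀}) :
      ⟪p i -ᵥ p i₀, p j -ᵥ p i₀⟫ = 1 / 2 + if i = j then 1 / 2 else 0 := by
    rw [vsub_eq_sub, vsub_eq_sub, real_inner_sub_sub_eq_dist, hp i.2, hp j.2]
    split_ifs with hij
    · rw [hij, _root_.dist_self]; norm_num
    · rw [hp (Subtype.coe_ne_coe.2 hij)]; norm_num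
  -- pairing the relation with each vector gives `g j = -∑ g`, so all weights coincide
  have hweight : ∀ j ∈ s, g j = -∑ i ∈ s, g i := by
    intro j hj
    have h := congrArg (fun v => ⟪v, p j -ᵥ p i₀⟫) hg
    simp only [sum_inner, real_inner_smul_left, hgram, inner_zero_left, mul_add, mul_ite,
      mul_zero, Finset.sum_add_distrib, Finset.sum_ite_eq', if_pos hj, ← Finset.sum_mul] at h
    linarith
  have hsum : ∑ i ∈ s, g i = 0 := by
    have h := Finset.sum_congr rfl hweight
    rw [Finset.sum_const, nsmul_eq_mul] at h
    have : ((s.card : ℝ) + 1) * ∑ i ∈ s, g i = 0 := by linarith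
    exact (mul_eq_zero.1 this).resolve_left (Nat.cast_add_one_ne_zero s.card)
  intro j hj
  rw [hweight j hj, hsum, neg_zero]

variable [FiniteDimensional ℝ E]

theorem exists_isometryEquiv_comp_eq_of_dist_eq {ι : Type*} [Fintype ι] {p q : ι → E}
    (hp : AffineIndependent ℝ p) (hcard : Fintype.card ι = finrank ℝ E + 1)
    (hpq : ∀ i j, dist (q i) (q j) = dist (p i) (p j)) :
    ∃ T : E ≃ᵢ E, q = T ∘ p := by
  classical
  obtain ⟨i₀⟩ : Nonempty ι := Fintype.card_pos_iff.1 (by omega)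
  let b : Basis {i // i ≠ i₀} ℝ E := basisOfLinearIndependentOfCardEqFinrank'
    (fun i => p i - p i₀) ((affineIndependent_iff_linearIndependent_vsub ℝ p i₀).1 hp)
    (by simp [hcard])
  let L : E →ₗ[ℝ] E := b.constr ℝ fun i => q i - q i₀
  have hb (i : {i // i ≠ i₀}) : b i = p i - p i₀ := by simp [b]
  have hLb (i : {i // i ≠ i₀}) : L (p i - p i₀) = q i - q i₀ := by
    rw [← hb, b.constr_basis]
  have hL : ∀ x y, ⟪L x, L y⟫ = ⟪x, y⟫ := by
    have : (innerₗ E).compl₁₂ L L = innerₗ E := by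
      refine LinearMap.ext_basis b b fun i j => ?_
      rw [LinearMap.compl₁₂_apply, innerₗ_apply_apply, innerₗ_apply_apply, hb, hb, hLb, hLb,
        real_inner_sub_sub_eq_dist, real_inner_sub_sub_eq_dist, hpq, hpq, hpq]
    exact fun x y => congrArg (fun B : E →ₗ[ℝ] E →ₗ[ℝ] ℝ => B x y) this
  let A : E ≃ᵢ E := ((L.isometryOfInner hL).toLinearIsometryEquiv rfl).toIsometryEquiv
  let T : E ≃ᵢ E :=
    (IsometryEquiv.subRight (p i₀)).trans (A.trans (IsometryEquiv.addRight (q i₀)))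
  have hT (x : E) : T x = L (x - p i₀) + q i₀ := rfl
  refine ⟨T, funext fun i => ?_⟩
  rw [Function.comp_apply, hT]
  by_cases hi : i = i₀
  · subst hi; simp
  · rw [hLb ⟨i, hi⟩, sub_add_cancel]

theorem eq_or_eq_of_dist_eq_of_card_eq_finrank {ι : Type*} [Fintype ι] {q : ι → E}
    (hq : AffineIndependent ℝ q) (hcard : Fintype.card ι = finrank ℝ E) {x y z : E}
    (hy : ∀ i, dist y (q i) = dist x (q i)) (hz : ∀ i, dist z (q i) = dist x (q i))
    (hzx : z ≠ x) : y = x ∨ y = z := by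
  rcases isEmpty_or_nonempty ι with hι | ⟨⟨i₀⟩⟩
  · have : Subsingleton E := finrank_zero_iff.1 (hcard ▸ Fintype.card_eq_zero)
    exact (hzx (Subsingleton.elim _ _)).elim
  set W := vectorSpan ℝ (Set.range q)
  have hW : finrank ℝ Wᗮ = 1 := by
    have := W.finrank_add_finrank_orthogonal
    have hpos : 0 < Fintype.card ι := Fintype.card_pos_iff.2 ⟨i₀⟩
    rw [hq.finrank_vectorSpan (n := finrank ℝ E - 1) (by omega)] at this
    omega
  have hperp (w : E) (hw : ∀ i, dist w (q i) = dist x (q i)) : w - x ∈ Wᗮ := by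
    have hspan : W = Submodule.span ℝ ((· -ᵥ q i₀) '' Set.range q) :=
      vectorSpan_eq_span_vsub_set_right ℝ (Set.mem_range_self i₀)
    have : Submodule.span ℝ {w - x} ⟂ W := by
      rw [hspan, Submodule.isOrtho_span]
      rintro u rfl - ⟨-, ⟨i, rfl⟩, rfl⟩
      rw [real_inner_comm]
      exact EuclideanGeometry.inner_vsub_vsub_of_dist_eq_of_dist_eq (hw i₀).symm (hw i).symm
    exact this (Submodule.mem_span_singleton_self _)
  have hzx' : z - x ≠ 0 := sub_ne_zero.2 hzx
  obtain ⟨t, ht⟩ := (finrank_eq_one_iff_of_nonzero' (⟨z - x, hperp z hz⟩ : Wᗮ)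
    (by simpa using hzx')).1 hW ⟨y - x, hperp y hy⟩
  have hyt : y = t • (z - x) +ᵥ x := by
    rw [vadd_eq_add, ← sub_eq_iff_eq_add]; exact (congrArg Subtype.val ht).symm
  have hz1 : z = (1 : ℝ) • (z - x) +ᵥ x := by simp
  have h₁ := (EuclideanGeometry.dist_smul_vadd_eq_dist x (q i₀) hzx' t).1 (hyt ▸ hy i₀)
  have h₂ := (EuclideanGeometry.dist_smul_vadd_eq_dist x (q i₀) hzx' 1).1 (hz1 ▸ hz i₀)
  rcases h₁ with rfl | rfl
  · left; simpa using hyt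
  · right; rw [hyt, ← h₂.resolve_left one_ne_zero, ← hz1]

end Geometry

namespace SimpleGraph

variable {G : SimpleGraph V}

def IsSimplicial (G : SimpleGraph V) (v : V) : Prop := G.IsClique (G.neighborSet v)

def ReachableIn (G : SimpleGraph V) (T : Set V) (x y : V) : Prop :=
  ∃ p : G.Walk x y, ∀ z ∈ p.support, z ∈ T

namespace Walk

theorem two_le_length_of_not_adj {u v : V} (p : G.Walk u v) (huv : u ≠ v) (hadj : ¬ G.Adj u v) :
    2 ≤ p.length := by
  by_contra! h
  interval_cases hl : p.length
  · exact huv (eq_of_length_eq_zero hl)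
  · exact hadj (adj_of_length_eq_one hl)

theorem isChordless_of_length_eq_dist {u v : V} (p : G.Walk u v) (hp : p.length = G.dist u v) :
    p.IsChordless := by
  classical
  -- a subwalk of a geodesic is a geodesic, so one joining adjacent vertices is a single edge
  have hedge {x y : V} (q : G.Walk x y) (hq : q.IsSubwalk p) (hxy : G.Adj x y) :
      s(x, y) ∈ p.edges := by
    have hlen : q.length = 1 := by
      rw [length_eq_dist_of_subwalk hp hq, dist_eq_one_iff_adj.2 hxy]
    cases q with
    | nil => simp at hlen
    | cons h q =>
      obtain rfl := eq_of_length_eq_zero (by simpa using hlen)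
      exact hq.edges_subset (by simp)
  rw [isChordless_iff_forall_mem_edges]
  intro a b ha hb hab
  rw [← p.take_spec ha, mem_support_append_iff] at hb
  rcases hb with hb | hb
  · rw [Sym2.eq_swap]
    exact hedge _ ((isSubwalk_dropUntil _ hb).trans (isSubwalk_takeUntil _ ha)) hab.symm
  · exact hedge _ ((isSubwalk_takeUntil _ hb).trans (isSubwalk_dropUntil _ ha)) hab

theorem IsChordless.map {W : Type*} {H : SimpleGraph W} (f : G ↪g H) {u v : V} {p : G.Walk u v}
    (hp : p.IsChordless) : (p.map f.toHom).IsChordless := by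
  rw [isChordless_iff_forall_mem_edges] at hp ⊢
  intro a b ha hb hab
  simp only [support_map, List.mem_map] at ha hb
  obtain ⟨a, ha, rfl⟩ := ha
  obtain ⟨b, hb, rfl⟩ := hb
  rw [edges_map]
  exact List.mem_map.2 ⟨_, hp ha hb (f.map_adj_iff.1 hab), rfl⟩

theorem isChordless_append {u v : V} {p : G.Walk u v} {q : G.Walk v u}
    (hp : p.IsChordless) (hq : q.IsChordless)
    (hpq : ∀ x ∈ p.support, ∀ y ∈ q.support, x ∉ q.support → y ∉ p.support →
      ¬ G.Adj x y) :
    (p.append q).IsChordless := by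
  rw [isChordless_iff_forall_mem_edges]
  intro a b ha hb hab
  rw [mem_support_append_iff] at ha hb
  rw [edges_append, List.mem_append]
  by_cases hpp : a ∈ p.support ∧ b ∈ p.support
  · exact .inl (hp.mem_edges hpp.1 hpp.2 hab)
  by_cases hqq : a ∈ q.support ∧ b ∈ q.support
  · exact .inr (hq.mem_edges hqq.1 hqq.2 hab)
  exfalso
  rcases ha with ha | ha <;> rcases hb with hb | hb
  · exact hpp ⟨ha, hb⟩
  · exact hpq a ha b hb (fun h => hqq ⟨h, hb⟩) (fun h => hpp ⟨ha, h⟩) hab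
  · exact hpq b hb a ha (fun h => hqq ⟨ha, h⟩) (fun h => hpp ⟨h, hb⟩) hab.symm
  · exact hqq ⟨ha, hb⟩

end Walk

namespace ReachableIn

variable {T T' : Set V} {x y z : V}

theorem mem_left (h : G.ReachableIn T x y) : x ∈ T :=
  h.elim fun p hp => hp x p.start_mem_support

theorem refl (hx : x ∈ T) : G.ReachableIn T x x := ⟨.nil, by simpa using hx⟩

theorem symm (h : G.ReachableIn T x y) : G.ReachableIn T y x :=
  h.elim fun p hp => ⟨p.reverse, fun z hz => hp z (by simpa using hz)⟩

theorem trans (h : G.ReachableIn T x y) (h' : G.ReachableIn T y z) : G.ReachableIn T x z := by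
  obtain ⟨p, hp⟩ := h
  obtain ⟨q, hq⟩ := h'
  refine ⟨p.append q, fun w hw => ?_⟩
  rcases (Walk.mem_support_append_iff _ _).1 hw with hw | hw
  exacts [hp w hw, hq w hw]

theorem cons (hxy : G.Adj x y) (hx : x ∈ T) (h : G.ReachableIn T y z) : G.ReachableIn T x z :=
  h.elim fun p hp => ⟨.cons hxy p, by simpa [hx] using hp⟩

theorem mono (h : G.ReachableIn T x y) (hT : T ⊆ T') : G.ReachableIn T' x y :=
  h.elim fun p hp => ⟨p, fun z hz => hT (hp z hz)⟩

theorem reachableIn_setOf (h : G.ReachableIn T x y) :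
    G.ReachableIn {z | G.ReachableIn T z y} x y := by
  classical
  obtain ⟨p, hp⟩ := h
  exact ⟨p, fun z hz =>
    ⟨p.dropUntil z hz, fun w hw => hp w (p.support_dropUntil_subset_support hz hw)⟩⟩

theorem mem_of_forall_adj {A : Set V} (hA : ∀ x ∈ A, ∀ y, G.Adj x y → y ∈ T → y ∈ A)
    (h : G.ReachableIn T x y) (hx : x ∈ A) : y ∈ A := by
  obtain ⟨p, hp⟩ := h
  induction p with
  | nil => exact hx
  | cons hadj p ih =>
    exact ih (hA _ hx _ hadj (hp _ (by simp))) fun z hz => hp z (by simp [hz])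

end ReachableIn

theorem reachable_iff_reachableIn_univ {x y : V} :
    G.Reachable x y ↔ G.ReachableIn Set.univ x y :=
  ⟨fun ⟨p⟩ => ⟨p, fun _ _ => trivial⟩, fun ⟨p, _⟩ => ⟨p⟩⟩

theorem ReachableIn.map {W : Type*} {H : SimpleGraph W} (f : H →g G) {T : Set W} {x y : W}
    (h : H.ReachableIn T x y) : G.ReachableIn (f '' T) (f x) (f y) := by
  obtain ⟨p, hp⟩ := h
  refine ⟨p.map f, fun z hz => ?_⟩
  rw [Walk.support_map, List.mem_map] at hz
  obtain ⟨w, hw, rfl⟩ := hz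
  exact ⟨w, hp w hw, rfl⟩

theorem reachableIn_induce_iff {s : Set V} {T : Set s} {x y : s} :
    (G.induce s).ReachableIn T x y ↔ G.ReachableIn (Subtype.val '' T) x y := by
  refine ⟨fun h => h.map (Embedding.induce s).toHom, fun ⟨p, hp⟩ => ?_⟩
  have hps : ∀ z ∈ p.support, z ∈ s := fun z hz => by
    obtain ⟨w, -, rfl⟩ := hp z hz; exact w.2
  refine ⟨p.induce s hps, fun z hz => ?_⟩
  simp only [Walk.support_induce, List.mem_attachWith] at hz
  obtain ⟨w, hw, hwz⟩ := hp z hz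
  rwa [← Subtype.val_injective hwz]

theorem reachable_induce_iff {s : Set V} {x y : s} :
    (G.induce s).Reachable x y ↔ G.ReachableIn s x y := by
  rw [reachable_iff_reachableIn_univ, reachableIn_induce_iff, Set.image_univ, Subtype.range_coe]

theorem ReachableIn.exists_isPath_isChordless {T : Set V} {x y : V} (h : G.ReachableIn T x y) :
    ∃ p : G.Walk x y, p.IsPath ∧ p.IsChordless ∧ ∀ z ∈ p.support, z ∈ T := by
  obtain ⟨p, hp, hlen⟩ :=
    (reachable_induce_iff.2 h : (G.induce T).Reachable ⟨x, h.mem_left⟩ ⟨y, h.symm.mem_left⟩)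
      |>.exists_path_of_dist
  let f := Embedding.induce T (G := G)
  -- `f ⟨x, _⟩` is `x` only up to unfolding `f`, so the walk is first built between these
  have : ∃ q : G.Walk (f ⟨x, h.mem_left⟩) (f ⟨y, h.symm.mem_left⟩),
      q.IsPath ∧ q.IsChordless ∧ ∀ z ∈ q.support, z ∈ T := by
    refine ⟨p.map f.toHom, hp.map f.injective, (p.isChordless_of_length_eq_dist hlen).map f,
      fun z hz => ?_⟩
    rw [Walk.support_map, List.mem_map] at hz
    obtain ⟨w, -, rfl⟩ := hz
    exact w.2
  exact this

theorem not_reachableIn_compl_neighborSet {x y : V} (hxy : x ≠ y) :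
    ¬ G.ReachableIn (G.neighborSet x)ᶜ x y := by
  rintro ⟨p, hp⟩
  have hnil := Walk.not_nil_of_ne (p := p) hxy
  exact hp _ (p.getVert_mem_support 1) (p.adj_snd hnil)

theorem IsSimplicial.reachableIn_diff {T : Set V} {v x y : V} (hv : G.IsSimplicial v)
    (h : G.ReachableIn T x y) (hx : x ≠ v) (hy : y ≠ v) : G.ReachableIn (T \ {v}) x y := by
  obtain ⟨p, hp⟩ := h
  -- a walk through `v` enters and leaves it via two neighbours of `v`, which are adjacent
  suffices ∀ {x y : V} (p : G.Walk x y), (∀ z ∈ p.support, z ∈ T) → y ≠ v →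
      (x ≠ v → G.ReachableIn (T \ {v}) x y) ∧
      (x = v → ∀ w, G.Adj v w → w ∈ T → G.ReachableIn (T \ {v}) w y) from
    (this p hp hy).1 hx
  intro x y p hp hy
  induction p with
  | nil => exact ⟨fun hx => .refl ⟨hp _ (by simp), hx⟩, fun hx => (hy hx).elim⟩
  | @cons x c y hxc p ih =>
    have hxT : x ∈ T := hp x (by simp)
    have ih := ih (fun z hz => hp z (by simp [hz])) hy
    refine ⟨fun hx => ?_, ?_⟩
    · by_cases hc : c = v
      · exact ih.2 hc x (hc ▸ hxc.symm) hxT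
      · exact (ih.1 hc).cons hxc ⟨hxT, hx⟩
    · rintro rfl w hw hwT
      have hcy := ih.1 hxc.ne'
      by_cases hwc : w = c
      · exact hwc ▸ hcy
      · exact hcy.cons (hv hw hxc hwc) ⟨hwT, hw.ne'⟩

theorem IsSimplicial.of_induce {s : Set V} {v : s} (hv : (G.induce s).IsSimplicial v)
    (hN : G.neighborSet v ⊆ s) : G.IsSimplicial v :=
  fun x hx y hy hxy => @hv ⟨x, hN hx⟩ hx ⟨y, hN hy⟩ hy fun h => hxy congr($h.1)

theorem IsSimplicial.ncard_neighborSet_le [Finite V] {m : ℕ} {v : V}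
    (hv : G.IsSimplicial v) (hclq : CliqueNumAtMost G (m + 1)) : (G.neighborSet v).ncard ≤ m := by
  have hfin := Set.toFinite (insert v (G.neighborSet v))
  have hclique : G.IsNClique (G.neighborSet v).ncard.succ hfin.toFinset := by
    refine ⟨?_, ?_⟩
    · rw [Set.Finite.coe_toFinset]
      exact hv.insert fun _ hw _ => hw
    · rw [← Set.ncard_eq_toFinset_card _ hfin,
        Set.ncard_insert_of_notMem G.notMem_neighborSet_self]
  have := hclq _ _ hclique
  omega

def IsSeparator (G : SimpleGraph V) (S : Set V) (a b : V) : Prop :=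
  a ∉ S ∧ b ∉ S ∧ ¬ G.ReachableIn Sᶜ a b

namespace IsSeparator

variable {S : Set V} {a b : V}

theorem symm (h : G.IsSeparator S a b) : G.IsSeparator S b a :=
  ⟨h.2.1, h.1, fun h' => h.2.2 h'.symm⟩

theorem ne_and_not_adj (hS : G.IsSeparator S a b) {x y : V} (hx : G.ReachableIn Sᶜ x a)
    (hy : G.ReachableIn Sᶜ y b) : x ≠ y ∧ ¬ G.Adj x y := by
  refine ⟨fun hxy => hS.2.2 (hx.symm.trans (hxy ▸ hy)), fun hxy => hS.2.2 ?_⟩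
  exact (ReachableIn.cons hxy.symm hy.mem_left hx).symm.trans hy

theorem exists_adj_of_minimal [Finite V] (hS : G.IsSeparator S a b)
    (hmin : ∀ S', G.IsSeparator S' a b → S.ncard ≤ S'.ncard) {s : V} (hs : s ∈ S) :
    ∃ x, G.Adj s x ∧ G.ReachableIn Sᶜ x a := by
  by_contra! h
  -- otherwise the side of `a` is still cut off by `S \ {s}`
  have hsep : G.IsSeparator (S \ {s}) a b := by
    refine ⟨fun ha => hS.1 ha.1, fun hb => hS.2.1 hb.1, fun hab => hS.2.2 ?_⟩
    refine (hab.mem_of_forall_adj (A := {x | G.ReachableIn Sᶜ x a}) ?_ (.refl hS.1)).symm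
    intro x hx y hxy hy
    by_cases hys : y = s
    · exact (h x (hys ▸ hxy.symm) hx).elim
    · exact ReachableIn.cons hxy.symm (fun hyS => hy ⟨hyS, hys⟩) hx
  have := hmin _ hsep
  have := Set.ncard_sdiff_singleton_lt_of_mem hs (Set.toFinite S)
  omega

theorem exists_isChordless_path [Finite V] (hS : G.IsSeparator S a b)
    (hmin : ∀ S', G.IsSeparator S' a b → S.ncard ≤ S'.ncard) {s t : V} (hs : s ∈ S)
    (ht : t ∈ S) :
    ∃ p : G.Walk s t, p.IsPath ∧ p.IsChordless ∧
      ∀ z ∈ p.support, z = s ∨ z = t ∨ G.ReachableIn Sᶜ z a := by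
  obtain ⟨xs, hsxs, hxs⟩ := hS.exists_adj_of_minimal hmin hs
  obtain ⟨xt, htxt, hxt⟩ := hS.exists_adj_of_minimal hmin ht
  have hside : G.ReachableIn {z | z = s ∨ z = t ∨ G.ReachableIn Sᶜ z a} xs xt :=
    (hxs.trans hxt.symm).reachableIn_setOf.mono fun z hz => .inr (.inr (hz.trans hxt))
  exact ((hside.symm.cons htxt (.inr (.inl rfl))).symm.cons hsxs (.inl rfl))
    |>.exists_isPath_isChordless

end IsSeparator

theorem exists_isSeparator_minimal [Finite V] {a b : V} (hab : a ≠ b) (hadj : ¬ G.Adj a b) :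
    ∃ S, G.IsSeparator S a b ∧ ∀ S', G.IsSeparator S' a b → S.ncard ≤ S'.ncard :=
  Set.exists_min_image {S | G.IsSeparator S a b} Set.ncard (Set.toFinite _)
    ⟨G.neighborSet a, G.notMem_neighborSet_self, hadj, not_reachableIn_compl_neighborSet hab⟩

end SimpleGraph

open SimpleGraph

section

variable {G : SimpleGraph V}

theorem isDConnected_iff [Fintype V] {d : ℕ} :
    IsDConnected d G ↔ d < Fintype.card V ∧
      ∀ S : Set V, S.ncard < d → ∀ x ∉ S, ∀ y ∉ S, G.ReachableIn Sᶜ x y := by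
  refine and_congr_right fun hd => forall_congr' fun S => imp_congr_right fun hS => ?_
  have hne : (Sᶜ : Set V).Nonempty := by
    refine Set.nonempty_compl.2 fun h => ?_
    rw [h, Set.ncard_univ, Nat.card_eq_fintype_card] at hS
    omega
  rw [connected_iff, Preconnected]
  simp only [hne.to_subtype, and_true, Subtype.forall, reachable_induce_iff, Set.mem_compl_iff]

namespace IsDConnected

variable [Fintype V] {d : ℕ}

theorem le_ncard_neighborSet (hconn : IsDConnected d G) (v : V) :
    d ≤ (G.neighborSet v).ncard := by
  by_contra! h
  obtain ⟨w, hw⟩ : ∃ w, w ∉ insert v (G.neighborSet v) := by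
    by_contra! hall
    have := Set.ncard_insert_le v (G.neighborSet v)
    rw [Set.eq_univ_iff_forall.2 hall, Set.ncard_univ, Nat.card_eq_fintype_card] at this
    have := hconn.1
    omega
  rw [Set.mem_insert_iff, not_or] at hw
  exact not_reachableIn_compl_neighborSet (Ne.symm hw.1)
    ((isDConnected_iff.1 hconn).2 _ h v G.notMem_neighborSet_self w hw.2)

theorem adj_of_card_eq (hconn : IsDConnected d G) (hcard : Fintype.card V = d + 1) {x y : V}
    (hxy : x ≠ y) : G.Adj x y := by
  have hsub : G.neighborSet x ⊆ {x}ᶜ := fun z hz => (G.ne_of_adj hz).symm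
  have hcompl : ({x}ᶜ : Set V).ncard = d := by
    rw [Set.ncard_compl, Set.ncard_singleton, Nat.card_eq_fintype_card, hcard, Nat.add_sub_cancel]
  have heq := Set.eq_of_subset_of_ncard_le hsub (hcompl ▸ hconn.le_ncard_neighborSet x)
  exact (heq ▸ Set.mem_compl_singleton_iff.2 hxy.symm : y ∈ G.neighborSet x)

theorem induce_compl_singleton [DecidableEq V] (hconn : IsDConnected d G) {v : V}
    (hv : G.IsSimplicial v) (hcard : d + 2 ≤ Fintype.card V) :
    IsDConnected d (G.induce {v}ᶜ) := by
  rw [isDConnected_iff] at hconn ⊢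
  refine ⟨?_, fun S hS x hx y hy => ?_⟩
  · rw [Fintype.card_compl_set, Set.card_singleton]
    omega
  have himage : Subtype.val '' Sᶜ = (Subtype.val '' S)ᶜ \ {v} := by
    ext z
    constructor
    · rintro ⟨z, hz, rfl⟩
      exact ⟨fun ⟨w, hw, hwz⟩ => hz (Subtype.val_injective hwz ▸ hw), z.2⟩
    · rintro ⟨hz, hzv⟩
      exact ⟨⟨z, hzv⟩, fun h => hz ⟨_, h, rfl⟩, rfl⟩
  rw [reachableIn_induce_iff, himage]
  refine hv.reachableIn_diff (hconn.2 _ ?_ x ?_ y ?_) x.2 y.2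
  · rwa [Set.ncard_image_of_injective _ Subtype.val_injective]
  · exact fun ⟨w, hw, hwx⟩ => hx (Subtype.val_injective hwx ▸ hw)
  · exact fun ⟨w, hw, hwy⟩ => hy (Subtype.val_injective hwy ▸ hw)

end IsDConnected

theorem walkHasChord_iff_not_isChordless {v : V} (w : G.Walk v v) :
    WalkHasChord w ↔ ¬ w.IsChordless := by
  simp [WalkHasChord, Walk.isChordless_iff_forall_mem_edges]

namespace IsChordal

theorem induce (hG : IsChordal G) (s : Set V) : IsChordal (G.induce s) := by
  intro v w hw hlen
  rw [walkHasChord_iff_not_isChordless]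
  intro hchordless
  have := hG _ (w.map (Embedding.induce s).toHom)
    ((Walk.isCycle_map_iff_of_injective Subtype.val_injective).2 hw)
    (by rw [Walk.length_map]; exact hlen)
  exact (walkHasChord_iff_not_isChordless _).1 this (hchordless.map _)

theorem adj_of_isChordless_paths (hG : IsChordal G) {A B : Set V} {s t : V} (hst : s ≠ t)
    {p : G.Walk s t} {q : G.Walk t s} (hp : p.IsPath) (hq : q.IsPath) (hpc : p.IsChordless)
    (hqc : q.IsChordless) (hpA : ∀ z ∈ p.support, z = s ∨ z = t ∨ z ∈ A)
    (hqB : ∀ z ∈ q.support, z = s ∨ z = t ∨ z ∈ B)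
    (hAB : ∀ x ∈ A, ∀ y ∈ B, x ≠ y ∧ ¬ G.Adj x y) : G.Adj s t := by
  by_contra hadj
  have hp2 := p.two_le_length_of_not_adj hst hadj
  have hq2 := q.two_le_length_of_not_adj hst.symm fun h => hadj h.symm
  have hcycle : (p.append q).IsCycle := by
    refine hp.isCycle_append hq (fun z hzp hzq => ?_) (.inl (by omega))
    have hzs : z ≠ s := by
      rintro rfl
      exact (List.nodup_cons.1 (p.cons_tail_support ▸ hp.support_nodup)).1 hzp
    have hzt : z ≠ t := by
      rintro rfl
      exact (List.nodup_cons.1 (q.cons_tail_support ▸ hq.support_nodup)).1 hzq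
    obtain h | h | hzA := hpA z (List.mem_of_mem_tail hzp)
    · exact hzs h
    · exact hzt h
    obtain h | h | hzB := hqB z (List.mem_of_mem_tail hzq)
    · exact hzs h
    · exact hzt h
    exact (hAB z hzA z hzB).1 rfl
  have hchordless : (p.append q).IsChordless := by
    refine Walk.isChordless_append hpc hqc fun x hx y hy hxq hyp => ?_
    obtain rfl | rfl | hxA := hpA x hx
    · exact (hxq q.end_mem_support).elim
    · exact (hxq q.start_mem_support).elim
    obtain rfl | rfl | hyB := hqB y hy
    · exact (hyp p.start_mem_support).elim
    · exact (hyp p.end_mem_support).elim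
    exact (hAB x hxA y hyB).2
  exact (walkHasChord_iff_not_isChordless _).1
    (hG s _ hcycle (by rw [Walk.length_append]; omega)) hchordless

theorem isClique_of_isSeparator_minimal [Finite V] (hG : IsChordal G) {S : Set V} {a b : V}
    (hS : G.IsSeparator S a b) (hmin : ∀ S', G.IsSeparator S' a b → S.ncard ≤ S'.ncard) :
    G.IsClique S := by
  intro s hs t ht hst
  obtain ⟨p, hp, hpc, hpA⟩ := hS.exists_isChordless_path hmin hs ht
  obtain ⟨q, hq, hqc, hqB⟩ := hS.symm.exists_isChordless_path (fun S' h => hmin S' h.symm) ht hs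
  refine hG.adj_of_isChordless_paths hst hp hq hpc hqc hpA (fun z hz => ?_)
    fun x hx y hy => hS.ne_and_not_adj hx hy
  obtain h | h | h := hqB z hz
  exacts [.inr (.inl h), .inl h, .inr (.inr h)]

theorem exists_isSimplicial_notMem [Fintype V] (hG : IsChordal G) {K : Set V}
    (hK : G.IsClique K) (hKV : ∃ x, x ∉ K) : ∃ v ∉ K, G.IsSimplicial v := by
  induction h : Fintype.card V using Nat.strong_induction_on generalizing V with
  | _ n ih =>
  by_cases hcomplete : ∀ x y : V, x ≠ y → G.Adj x y
  · obtain ⟨v, hv⟩ := hKV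
    exact ⟨v, hv, fun x _ y _ hxy => hcomplete x y hxy⟩
  obtain ⟨a, b, hab, hadj⟩ : ∃ a b, a ≠ b ∧ ¬ G.Adj a b := by simpa using hcomplete
  obtain ⟨S, hS, hmin⟩ := exists_isSeparator_minimal hab hadj
  have hSK := hG.isClique_of_isSeparator_minimal hS hmin
  -- the clique `K` misses the side of `a` or that of `b`, as no edge joins the two sides
  wlog hKa : ∀ x ∈ K, ¬ G.ReachableIn Sᶜ x a generalizing a b
  · refine this b a hab.symm (fun h => hadj h.symm) hS.symm (fun S' h => hmin S' h.symm)
      fun y hyK hyb => hKa fun x hxK hxa => ?_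
    obtain ⟨hxy, hnadj⟩ := hS.ne_and_not_adj hxa hyb
    exact hnadj (hK hxK hyK hxy)
  -- a simplicial vertex of `G[A ∪ S]` outside `S`, for the side `A` of `a`, stays simplicial
  classical
  let M : Set V := {x | G.ReachableIn Sᶜ x a} ∪ S
  have hcard : Fintype.card M < n := by
    rw [← h]
    refine Fintype.card_subtype_lt (x := b) fun hb => ?_
    rcases hb with hb | hb
    exacts [hS.2.2 hb.symm, hS.2.1 hb]
  obtain ⟨v, hvS, hv⟩ := ih _ hcard (hG.induce M) (K := Subtype.val ⁻¹' S)
    (isClique_induce_iff.2 (hSK.subset (Set.image_preimage_subset _ _)))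
    ⟨⟨a, .inl (.refl hS.1)⟩, hS.1⟩ rfl
  have hva : G.ReachableIn Sᶜ v a := v.2.resolve_right hvS
  refine ⟨v, fun hvK => hKa v hvK hva, hv.of_induce fun y hy => ?_⟩
  by_cases hyS : y ∈ S
  · exact .inr hyS
  · exact .inl (ReachableIn.cons (G.adj_symm hy) hyS hva)

theorem exists_adj_forall_of_isDConnected [Fintype V] {d : ℕ} (hG : IsChordal G)
    (hconn : IsDConnected d G) {C : Set V} (hC : G.IsClique C) (hCd : C.ncard ≤ d) :
    ∃ u ∉ C, ∀ c ∈ C, G.Adj u c := by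
  induction h : Fintype.card V using Nat.strong_induction_on generalizing V with
  | _ n ih =>
  have hCV : ∃ x, x ∉ C := by
    by_contra! hall
    rw [Set.eq_univ_iff_forall.2 hall, Set.ncard_univ, Nat.card_eq_fintype_card] at hCd
    have := hconn.1
    omega
  rcases Nat.lt_or_ge (d + 1) n with hlt | hle
  · classical
    obtain ⟨v, hvC, hv⟩ := hG.exists_isSimplicial_notMem hC hCV
    have hCv : C ⊆ {v}ᶜ := fun c hc hcv => hvC (hcv ▸ hc)
    have hcard : Fintype.card ({v}ᶜ : Set V) < n := by
      rw [← h, Fintype.card_compl_set, Set.card_singleton]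
      omega
    obtain ⟨u, huC, hu⟩ := ih _ hcard (hG.induce {v}ᶜ) (hconn.induce_compl_singleton hv (by omega)) (C := Subtype.val ⁻¹' C)
      (isClique_induce_iff.2 (hC.subset (Set.image_preimage_subset _ _)))
      (by rwa [Set.ncard_preimage_of_injective_subset_range Subtype.val_injective
        (by rwa [Subtype.range_coe])]) rfl
    exact ⟨u, huC, fun c hc => hu ⟨c, hCv hc⟩ hc⟩
  · obtain ⟨u, hu⟩ := hCV
    have hcard : Fintype.card V = d + 1 := by have := hconn.1; omega
    exact ⟨u, hu, fun c hc => hconn.adj_of_card_eq hcard fun huc => hu (huc ▸ hc)⟩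

end IsChordal

namespace IsSphereRealisation

variable {d : ℕ} {ρ ρ' : V → EuclideanSpace ℝ (Fin d)}

theorem comp_isometry (hρ : IsSphereRealisation d G ρ)
    {f : EuclideanSpace ℝ (Fin d) → EuclideanSpace ℝ (Fin d)} (hf : Isometry f) :
    IsSphereRealisation d G (f ∘ ρ) :=
  ⟨fun v w h => (hf.dist_eq _ _).trans (hρ.1 v w h),
    fun v w hvw h => (hf.dist_eq _ _).symm ▸ hρ.2 v w hvw h⟩

theorem induce (hρ : IsSphereRealisation d G ρ) (s : Set V) :
    IsSphereRealisation d (G.induce s) (ρ ∘ Subtype.val) :=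
  ⟨fun _ _ h => hρ.1 _ _ h, fun _ _ hvw h => hρ.2 _ _ (Subtype.val_injective.ne hvw) h⟩

theorem affineIndependent (hρ : IsSphereRealisation d G ρ) {K : Set V} (hK : G.IsClique K) :
    AffineIndependent ℝ fun v : K => ρ v :=
  affineIndependent_of_pairwise_dist_eq_one fun v w hvw =>
    hρ.1 _ _ (hK v.2 w.2 (Subtype.val_injective.ne hvw))

theorem cliqueNumAtMost (hρ : IsSphereRealisation d G ρ) : CliqueNumAtMost G (d + 1) := by
  intro n s hs
  have h := (hρ.affineIndependent hs.1).card_le_finrank_succ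
  have hspan := Submodule.finrank_le (vectorSpan ℝ (Set.range fun v : (s : Set V) => ρ v))
  rw [finrank_euclideanSpace_fin] at hspan
  have hn : Fintype.card (s : Set V) = n := by simpa using hs.2
  omega

theorem realisationCongruent_of_forall_adj [Fintype V] (hρ : IsSphereRealisation d G ρ)
    (hρ' : IsSphereRealisation d G ρ') (hcard : Fintype.card V = d + 1)
    (hadj : ∀ x y, x ≠ y → G.Adj x y) : RealisationCongruent d ρ ρ' := by
  refine exists_isometryEquiv_comp_eq_of_dist_eq
    (affineIndependent_of_pairwise_dist_eq_one fun x y hxy => hρ.1 x y (hadj x y hxy))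
    (by rw [hcard, finrank_euclideanSpace_fin]) fun x y => ?_
  by_cases hxy : x = y
  · simp [hxy]
  · rw [hρ.1 _ _ (hadj x y hxy), hρ'.1 _ _ (hadj x y hxy)]

theorem realisationCongruent_of_induce_compl [Fintype V] (hρ : IsSphereRealisation d G ρ)
    (hρ' : IsSphereRealisation d G ρ') {v u : V} (hv : G.IsSimplicial v)
    (hdeg : (G.neighborSet v).ncard = d) (huv : u ≠ v) (hvu : ¬ G.Adj v u)
    (hu : ∀ c ∈ G.neighborSet v, G.Adj u c)
    (h : RealisationCongruent d (ρ ∘ ((↑) : ({v}ᶜ : Set V) → V)) (ρ' ∘ (↑))) :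
    RealisationCongruent d ρ ρ' := by
  classical
  obtain ⟨T, hT⟩ := h
  set σ := T.symm ∘ ρ'
  have hσ : IsSphereRealisation d G σ := hρ'.comp_isometry T.symm.isometry
  have hσρ (w : V) (hw : w ≠ v) : σ w = ρ w := by
    show T.symm (ρ' w) = ρ w
    rw [T.symm_apply_eq]
    exact congrFun hT ⟨w, hw⟩
  -- `σ v`, `ρ v` and `ρ u` are all at unit distance from the `d` affinely independent points
  -- `ρ (N v)`, hence `σ v ∈ {ρ v, ρ u}`, and `σ v = ρ u` would make `σ v, σ u` too close
  have hσv : σ v = ρ v := by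
    have hcard : Fintype.card (G.neighborSet v) = finrank ℝ (EuclideanSpace ℝ (Fin d)) := by
      rw [← Nat.card_eq_fintype_card, Nat.card_coe_set_eq, hdeg, finrank_euclideanSpace_fin]
    have hρu : ρ u ≠ ρ v := fun h =>
      absurd (hρ.2 v u huv.symm hvu) (by rw [h, _root_.dist_self]; norm_num)
    have hσc (c : G.neighborSet v) : dist (σ v) (ρ c) = dist (ρ v) (ρ c) := by
      rw [hρ.1 _ _ c.2, ← hσρ c (G.ne_of_adj c.2).symm, hσ.1 _ _ c.2]
    have hρc (c : G.neighborSet v) : dist (ρ u) (ρ c) = dist (ρ v) (ρ c) := by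
      rw [hρ.1 _ _ (hu c c.2), hρ.1 _ _ c.2]
    obtain h | h := eq_or_eq_of_dist_eq_of_card_eq_finrank (hρ.affineIndependent hv) hcard
      hσc hρc hρu
    · exact h
    · exact absurd (hσ.2 v u huv.symm hvu) (by rw [h, hσρ u huv, _root_.dist_self]; norm_num)
  refine ⟨T, funext fun w => ?_⟩
  have hw : σ w = ρ w := by
    by_cases hw : w = v
    · exact hw ▸ hσv
    · exact hσρ w hw
  exact T.symm_apply_eq.1 hw

end IsSphereRealisation

end

theorem stmt12_general {V : Type*} [Fintype V] (d : ℕ) (G : SimpleGraph V)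
    (hchordal : IsChordal G) (hconn : IsDConnected d G) :
    GloballySphereRigid d G := by
  induction h : Fintype.card V using Nat.strong_induction_on generalizing V with
  | _ n ih =>
  intro ρ ρ' hρ hρ'
  rcases Nat.lt_or_ge (d + 1) n with hlt | hle
  · classical
    obtain ⟨v, -, hv⟩ := hchordal.exists_isSimplicial_notMem (K := ∅) (Set.pairwise_empty _)
      ⟨(Fintype.card_pos_iff.1 (by omega) : Nonempty V).some, id⟩
    have hdeg : (G.neighborSet v).ncard = d :=
      (hv.ncard_neighborSet_le hρ.cliqueNumAtMost).antisymm (hconn.le_ncard_neighborSet v)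
    have hconn' := hconn.induce_compl_singleton hv (by omega)
    obtain ⟨u, hvu, hu⟩ := (hchordal.induce {v}ᶜ).exists_adj_forall_of_isDConnected hconn'
      (C := Subtype.val ⁻¹' G.neighborSet v)
      (isClique_induce_iff.2 (hv.subset (Set.image_preimage_subset _ _)))
      (by rw [Set.ncard_preimage_of_injective_subset_range Subtype.val_injective
        (by rw [Subtype.range_coe]; exact fun x hx => (G.ne_of_adj hx).symm), hdeg])
    refine hρ.realisationCongruent_of_induce_compl hρ' hv hdeg u.2 hvu
      (fun c hc => hu ⟨c, (G.ne_of_adj hc).symm⟩ hc) ?_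
    refine ih _ ?_ _ (hchordal.induce _) hconn' rfl _ _ (hρ.induce _) (hρ'.induce _)
    rw [← h, Fintype.card_compl_set, Set.card_singleton]
    omega
  · exact hρ.realisationCongruent_of_forall_adj hρ' (by have := hconn.1; omega)
      fun x y => hconn.adj_of_card_eq (by have := hconn.1; omega)

theorem stmt12 {V : Type*} [Fintype V] (d : ℕ) (G : SimpleGraph V)
    (hchordal : IsChordal G) (hG : IsSphereGraph d G) (hd : d ≤ 3)
    (hcard : d + 1 ≤ Fintype.card V) (hconn : IsDConnected d G) :
    GloballySphereRigid d G :=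
  stmt12_general d G hchordal hconn
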